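/- Let d ≥ 1 be an integer and let ρ > 1 be a real number with ρ^{d+1} = ρ + 1. Let T : ℕ → ℝ satisfy: T(0) ≥ 1; T(m) ≥ 2 for all m with 1 ≤ m ≤ d; and for every m ≥ d + 1, either there exists d′ with 1 ≤ d′ ≤ d and T(m) ≥ 2·T(m − d′), or T(m) ≥ T(m − d) + T(m − d − 1). Then T(m) ≥ ρ^m for every m. -/
import Mathlib


theorem stmt_6 (d : ℕ) (hd : 1 ≤ d) (ρ : ℝ) (hρ : 1 < ρ)
    (hroot : ρ ^ (d + 1) = ρ + 1) (T : ℕ → ℝ)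
    (h0 : T 0 ≥ 1)
    (hsmall : ∀ m, 1 ≤ m → m ≤ d → T m ≥ 2)
    (hrec : ∀ m, d + 1 ≤ m →
      (∃ d', 1 ≤ d' ∧ d' ≤ d ∧ T m ≥ 2 * T (m - d')) ∨
      T m ≥ T (m - d) + T (m - d - 1)) :
    ∀ m, T m ≥ ρ ^ m := by
  have hρ0 : (0:ℝ) < ρ := lt_trans one_pos hρ
  have hρ1 : (1:ℝ) ≤ ρ := le_of_lt hρ
  -- ρ^d ≤ 2
  have hpd : ρ ^ d ≤ 2 := by
    have h1 : ρ * ρ ^ d = ρ + 1 := by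
      rw [← hroot]; ring
    have h2 : ρ + 1 ≤ 2 * ρ := by linarith
    nlinarith
  intro m
  induction m using Nat.strong_induction_on with
  | _ m ih =>
    rcases Nat.lt_or_ge m 1 with hm0 | hm1
    · interval_cases m
      simpa using h0
    rcases Nat.lt_or_ge m (d + 1) with hmd | hmd
    · have hle : m ≤ d := Nat.lt_succ_iff.mp hmd
      have : ρ ^ m ≤ ρ ^ d := pow_le_pow_right₀ hρ1 hle
      have := hsmall m hm1 hle
      linarith
    · rcases hrec m hmd with ⟨d', hd1, hd2, hT⟩ | hT
      · have hsub : m - d' < m := Nat.sub_lt (lt_of_lt_of_le Nat.one_pos hm1) hd1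
        have hih := ih _ hsub
        have hpd' : ρ ^ d' ≤ 2 := le_trans (pow_le_pow_right₀ hρ1 hd2) hpd
        have hsplit : ρ ^ m = ρ ^ d' * ρ ^ (m - d') := by
          rw [← pow_add, Nat.add_sub_cancel' (le_trans hd2 (le_trans (Nat.le_succ d) hmd))]
        have hpos : (0:ℝ) < ρ ^ (m - d') := pow_pos hρ0 _
        calc ρ ^ m = ρ ^ d' * ρ ^ (m - d') := hsplit
          _ ≤ 2 * ρ ^ (m - d') := by nlinarith
          _ ≤ 2 * T (m - d') := by nlinarith
          _ ≤ T m := hT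
      · have h1 : m - d < m := Nat.sub_lt (lt_of_lt_of_le Nat.one_pos hm1) hd
        have h2 : m - d - 1 < m := lt_of_le_of_lt (Nat.sub_le _ _) h1
        have ih1 := ih _ h1
        have ih2 := ih _ h2
        have e1 : m - d = (m - d - 1) + 1 := by omega
        have e2 : (m - d - 1) + (d + 1) = m := by omega
        have key : ρ ^ (m - d) + ρ ^ (m - d - 1) = ρ ^ m :=
          calc ρ ^ (m - d) + ρ ^ (m - d - 1) = ρ ^ (m - d - 1) * (ρ + 1) := by
                set k := m - d - 1 with hk
                rw [e1, pow_succ]; ring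
            _ = ρ ^ (m - d - 1) * ρ ^ (d + 1) := by rw [hroot]
            _ = ρ ^ m := by rw [← pow_add, e2]
        linarith
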